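/- With A = i(s eᵀ - e sᵀ), sᵀe = 0, s ≠ 0, the matrix sign (polar factor) of A is sign(A) = A/(‖s‖₂√n), i.e., this matrix is Hermitian with eigenvalues in {-1, 0, 1} and has the same range as A. -/

import Mathlib

/-!
Write `K = s eᵀ - e sᵀ`, a real skew-symmetric matrix, so that `A = i K` is Hermitian.
Because `sᵀ e = 0`, multiplying out gives `K³ = -(‖s‖² n) K`, hence `A³ = ‖s‖² n A` and
`S = A / (‖s‖ √n)` satisfies `S³ = S`. Every eigenvalue of `S` is therefore a root of
`x³ - x`, and `S`, a nonzero multiple of `A`, has the range of `A`.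
-/

open Matrix

namespace Matrix

variable {m R : Type*} [CommRing R]

theorem transpose_vecMulVec_sub_vecMulVec (u v : m → R) :
    (vecMulVec u v - vecMulVec v u)ᵀ = -(vecMulVec u v - vecMulVec v u) := by
  rw [transpose_sub, transpose_vecMulVec, transpose_vecMulVec, neg_sub]

theorem vecMulVec_sub_vecMulVec_pow_three [Fintype m] [DecidableEq m] (u v : m → R)
    (h : u ⬝ᵥ v = 0) :
    (vecMulVec u v - vecMulVec v u) ^ 3 =
      -((u ⬝ᵥ u) * (v ⬝ᵥ v)) • (vecMulVec u v - vecMulVec v u) := by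
  have h' : v ⬝ᵥ u = 0 := by rw [dotProduct_comm, h]
  simp only [pow_succ, pow_zero, Matrix.one_mul, sub_mul, mul_sub, vecMulVec_mul_vecMulVec, h, h',
    zero_smul, vecMulVec_zero, sub_zero, zero_sub, vecMulVec_smul, Matrix.neg_mul, Matrix.smul_mul]
  module

theorem isHermitian_I_smul_map_ofReal {K : Matrix m m ℝ} (hK : Kᵀ = -K) :
    (Complex.I • K.map Complex.ofReal).IsHermitian := by
  rw [IsHermitian, conjTranspose_smul, ← conjTranspose_map _ (fun _ => by simp),
    conjTranspose_eq_transpose_of_trivial, hK, Matrix.map_neg _ Complex.ofReal_neg,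
    Complex.star_def, Complex.conj_I, neg_smul, smul_neg, neg_neg]

theorem I_smul_map_ofReal_pow_three [Fintype m] [DecidableEq m] {K : Matrix m m ℝ} {t : ℝ}
    (hK : K ^ 3 = -t • K) :
    (Complex.I • K.map Complex.ofReal) ^ 3 = (t : ℂ) • Complex.I • K.map Complex.ofReal := by
  have hmap : (K.map Complex.ofReal) ^ 3 = (K ^ 3).map Complex.ofReal :=
    (Matrix.map_pow K Complex.ofRealHom 3).symm
  rw [smul_pow, hmap, hK]
  ext i j
  simp only [Matrix.smul_apply, map_apply, smul_eq_mul, Complex.ofReal_mul, Complex.ofReal_neg]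
  linear_combination -(t * K i j : ℂ) * Complex.I * Complex.I_sq

theorem range_mulVecLin_smul {n K : Type*} [Field K] [Fintype n] (M : Matrix m n K) {c : K}
    (hc : c ≠ 0) : LinearMap.range (c • M).mulVecLin = LinearMap.range M.mulVecLin := by
  rw [show (c • M).mulVecLin = c • M.mulVecLin from map_smul (mulVecBilin K K) c M,
    LinearMap.range_smul _ _ hc]

end Matrix

theorem spectrum_subset_of_pow_three_eq_self {𝕜 A : Type*} [Field 𝕜] [Ring A] [Algebra 𝕜 A]
    {a : A} (h : a ^ 3 = a) : spectrum 𝕜 a ⊆ {-1, 0, 1} := by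
  intro μ hμ
  have key : μ ^ 3 - μ ∈ spectrum 𝕜 (Polynomial.aeval a (.X ^ 3 - .X : Polynomial 𝕜)) :=
    spectrum.subset_polynomial_aeval a _ ⟨μ, hμ, by simp⟩
  rw [map_sub, map_pow, Polynomial.aeval_X, h, sub_self] at key
  have hμ3 : μ ^ 3 - μ = 0 := by
    by_contra hne
    exact spectrum.mem_iff.mp key
      (by simpa using (isUnit_iff_ne_zero.mpr hne).map (algebraMap 𝕜 A))
  have hfac : (μ + 1) * μ * (μ - 1) = 0 := by linear_combination hμ3
  rcases mul_eq_zero.mp hfac with hfac | hμ1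
  · rcases mul_eq_zero.mp hfac with hμ1 | hμ0
    · exact .inl (eq_neg_of_add_eq_zero_left hμ1)
    · exact .inr (.inl hμ0)
  · exact .inr (.inr (sub_eq_zero.mp hμ1))

/-- For centered nonzero `s` and `A = i(s eᵀ - e sᵀ)`, the matrix sign (polar factor)
of `A` is `A/(‖s‖₂ √n)`: it is Hermitian, has eigenvalues in `{-1, 0, 1}`, and has
the same range as `A`. -/
theorem matrix_sign_of_pairwise (n : ℕ) (s : Fin n → ℝ)
    (hs : ∑ i, s i = 0) (hs0 : s ≠ 0) (e : Fin n → ℝ) (he : e = fun _ => 1)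
    (A : Matrix (Fin n) (Fin n) ℂ)
    (hA : A = Complex.I • (vecMulVec s e - vecMulVec e s).map Complex.ofReal)
    (S : Matrix (Fin n) (Fin n) ℂ)
    (hS : S = (((Real.sqrt (∑ i, s i ^ 2) * Real.sqrt n)⁻¹ : ℝ) : ℂ) • A) :
    Sᴴ = S ∧ (∀ μ ∈ spectrum ℂ S, μ = -1 ∨ μ = 0 ∨ μ = 1) ∧
      LinearMap.range S.mulVecLin = LinearMap.range A.mulVecLin := by
  subst he
  set K : Matrix (Fin n) (Fin n) ℝ := vecMulVec s (fun _ => 1) - vecMulVec (fun _ => 1) s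
  set σ := ∑ i, s i ^ 2
  set c := (Real.sqrt σ * Real.sqrt n)⁻¹
  obtain ⟨i, hi⟩ := Function.ne_iff.mp hs0
  have hσ : 0 < σ :=
    Finset.sum_pos' (fun j _ => sq_nonneg (s j)) ⟨i, Finset.mem_univ i, sq_pos_of_ne_zero hi⟩
  have hn : 0 < (n : ℝ) := by exact_mod_cast i.pos
  have hc : (c : ℂ) ^ 2 * (σ * n) = 1 := by
    norm_cast
    rw [inv_pow, mul_pow, Real.sq_sqrt hσ.le, Real.sq_sqrt hn.le, inv_mul_cancel₀ (by positivity)]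
  have hK3 : K ^ 3 = -(σ * n) • K := by
    rw [vecMulVec_sub_vecMulVec_pow_three _ _ (by simpa [dotProduct] using hs)]
    congr 2
    simp [dotProduct, σ, sq]
  have hA3 : A ^ 3 = ((σ * n : ℝ) : ℂ) • A := hA ▸ I_smul_map_ofReal_pow_three hK3
  have hS3 : S ^ 3 = S := by
    rw [hS, smul_pow, hA3, smul_smul]
    congr 1
    push_cast
    linear_combination (c : ℂ) * hc
  refine ⟨?_, fun μ hμ => by simpa using spectrum_subset_of_pow_three_eq_self hS3 hμ, ?_⟩
  · rw [hS, hA]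
    exact (isHermitian_I_smul_map_ofReal (transpose_vecMulVec_sub_vecMulVec _ _)).smul
      (Complex.conj_ofReal c)
  · rw [hS, range_mulVecLin_smul A fun h => by simp [h] at hc]
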